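/- arXiv:1508.05777 — 2 statements merged into one kernel-verified Lean document; each statement's English description precedes it below -/
import Mathlib

section
/- In the game Nim^1_{6,≤3} (slow Moore's Nim with n = 6 piles, k = 3), a position x = (x_1, …, x_6) with 0 ≤ x_1 ≤ … ≤ x_6 is a P-position of normal play (i.e. G(x) = 0) if and only if its parity vector p(x) belongs to { (e,e,e,e,e,e), (e,e,o,o,o,o), (o,o,e,e,o,o), (o,o,o,o,e,e) }. -/
set_option maxRecDepth 100000
set_option synthInstance.maxSize 2000
set_option synthInstance.maxHeartbeats 2000000
set_option maxHeartbeats 4000000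

/-- The minimum excludant of a set of natural numbers. -/
noncomputable def mex (S : Set ℕ) : ℕ := sInf {n : ℕ | n ∉ S}

/-- A move in slow Moore's Nim `Nim¹_{n,≤k}`: at least `1` and at most `k`
coordinates, each strictly positive, are decreased by one token. -/
def MooreMove (n k : ℕ) (x y : Fin n → ℕ) : Prop :=
  (∀ i, y i ≤ x i ∧ x i ≤ y i + 1) ∧
  1 ≤ (Finset.univ.filter fun i => y i < x i).card ∧
  (Finset.univ.filter fun i => y i < x i).card ≤ k

theorem MooreMove.sum_lt {n k : ℕ} {x y : Fin n → ℕ} (h : MooreMove n k x y) :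
    ∑ i, y i < ∑ i, x i := by
  obtain ⟨h1, h2, -⟩ := h
  obtain ⟨i, hi⟩ := Finset.card_pos.mp h2
  rw [Finset.mem_filter] at hi
  exact Finset.sum_lt_sum (fun j _ => (h1 j).1) ⟨i, Finset.mem_univ i, hi.2⟩

/-- The normal-play Sprague–Grundy function of slow Moore's Nim:
`G(x) = mex {G(y) : y reachable from x in one move}`. -/
noncomputable def mooreG (n k : ℕ) (x : Fin n → ℕ) : ℕ :=
  mex (Set.range fun y : {y : Fin n → ℕ // MooreMove n k x y} => mooreG n k y.1)
termination_by ∑ i, x i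
decreasing_by exact y.2.sum_lt

/-! ### Auxiliary combinatorial definitions -/

def cnt (D : Fin 6 → Bool) : ℕ :=
  (D 0).toNat + (D 1).toNat + (D 2).toNat + (D 3).toNat + (D 4).toNat + (D 5).toNat

def ppat (p : Fin 6 → Bool) : Bool :=
  (p 0 == p 1) && (p 2 == p 3) && (p 4 == p 5) && !(xor (p 0) (xor (p 2) (p 4)))

def patOf (x : Fin 6 → ℕ) : Fin 6 → Bool := fun i => decide (x i % 2 = 1)

def Pp (x : Fin 6 → ℕ) : Prop := ppat (patOf (x ∘ Tuple.sort x)) = true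

lemma lemA : ∀ p D : Fin 6 → Bool, ppat p = true → 1 ≤ cnt D → cnt D ≤ 3 →
    ¬ (ppat (fun i => xor (p i) (D i)) = true) := by decide

lemma lemB : ∀ zb : Fin 6 → Bool,
    (∀ i : Fin 5, zb i.succ = true → zb i.castSucc = true) →
    ∀ eqb : Fin 5 → Bool,
    (∀ i : Fin 5, zb i.castSucc = true → zb i.succ = true → eqb i = true) →
    (∀ i : Fin 5, zb i.castSucc = true → eqb i = true → zb i.succ = true) →
    ∀ q : Fin 6 → Bool,
    (∀ i : Fin 6, zb i = true → q i = false) →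
    (∀ i : Fin 5, eqb i = true → q i.castSucc = q i.succ) →
    ¬ (ppat q = true) →
    ∃ D : Fin 6 → Bool, 1 ≤ cnt D ∧ cnt D ≤ 3 ∧
      (ppat (fun i => xor (q i) (D i)) = true) ∧
      (∀ i : Fin 6, D i = true → zb i = false) ∧
      (∀ i : Fin 5, eqb i = true → D i.succ = true → D i.castSucc = true) := by decide

lemma cnt_eq_card : ∀ D : Fin 6 → Bool,
    cnt D = (Finset.univ.filter fun i => D i = true).card := by decide

/-! ### mex and Grundy basics -/

lemma mex_eq_zero_iff {S : Set ℕ} (hS : S.Finite) : mex S = 0 ↔ 0 ∉ S := by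
  unfold mex
  rw [Nat.sInf_eq_zero]
  constructor
  · rintro (h | h)
    · exact h
    · exfalso
      have h2 : Sᶜ = (∅ : Set ℕ) := h
      have h3 : S = Set.univ := by
        rw [← compl_compl S, h2, Set.compl_empty]
      exact Set.infinite_univ (h3 ▸ hS)
  · exact fun h => Or.inl h

lemma movesSet_finite (n k : ℕ) (x : Fin n → ℕ) :
    (Set.range fun y : {y : Fin n → ℕ // MooreMove n k x y} => mooreG n k y.1).Finite := by
  classical
  have h1 : (Set.range fun y : {y : Fin n → ℕ // MooreMove n k x y} => mooreG n k y.1)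
      = mooreG n k '' {y | MooreMove n k x y} := (Set.image_eq_range _ _).symm
  rw [h1]
  apply Set.Finite.image
  apply (Set.finite_Icc (fun _ : Fin n => 0) x).subset
  intro y hy
  rw [Set.mem_Icc]
  exact ⟨fun i => Nat.zero_le _, fun i => (hy.1 i).1⟩

lemma mooreG_eq_zero_iff (n k : ℕ) (x : Fin n → ℕ) :
    mooreG n k x = 0 ↔ ∀ y, MooreMove n k x y → mooreG n k y ≠ 0 := by
  rw [mooreG, mex_eq_zero_iff (movesSet_finite n k x)]
  simp only [Set.mem_range, not_exists]
  exact ⟨fun h y hy h0 => h ⟨y, hy⟩ h0, fun h y h0 => h y.1 y.2 h0⟩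

/-! ### Sorting lemmas -/

lemma sort_comp_eq {n : ℕ} (y : Fin n → ℕ) (π : Equiv.Perm (Fin n))
    (h : Monotone (y ∘ π)) : y ∘ Tuple.sort y = y ∘ π :=
  (Tuple.comp_sort_eq_comp_iff_monotone.mpr h).symm

lemma comp_sort_self {n : ℕ} {u : Fin n → ℕ} (hu : Monotone u) :
    u ∘ Tuple.sort u = u := by
  have h := sort_comp_eq u (Equiv.refl _) (by simpa using hu)
  simpa using h

lemma sorted_le_sorted {n : ℕ} {a b : Fin n → ℕ} (h : ∀ i, a i ≤ b i) (i : Fin n) :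
    (a ∘ Tuple.sort a) i ≤ (b ∘ Tuple.sort b) i := by
  classical
  by_contra hlt
  push_neg at hlt
  have hma := Tuple.monotone_sort a
  have hmb := Tuple.monotone_sort b
  set c := (b ∘ Tuple.sort b) i with hc
  have hS : ∀ j : Fin n, j ≤ i → a (Tuple.sort b j) ≤ c := fun j hj =>
    le_trans (h _) (hmb hj)
  have hT : ∀ j : Fin n, i ≤ j → c < a (Tuple.sort a j) := fun j hj =>
    lt_of_lt_of_le hlt (hma hj)
  set S := (Finset.Iic i).image (Tuple.sort b) with hSdef
  set T := (Finset.Ici i).image (Tuple.sort a) with hTdef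
  have hdisj : Disjoint S T := by
    rw [Finset.disjoint_left]
    rintro k hk1 hk2
    simp only [hSdef, hTdef, Finset.mem_image, Finset.mem_Iic, Finset.mem_Ici] at hk1 hk2
    obtain ⟨j1, hj1, hk1⟩ := hk1
    obtain ⟨j2, hj2, hk2⟩ := hk2
    have e1 := hS j1 hj1
    have e2 := hT j2 hj2
    rw [hk1] at e1
    rw [hk2] at e2
    omega
  have hcS : S.card = i.val + 1 := by
    rw [hSdef, Finset.card_image_of_injective _ (Equiv.injective _), Fin.card_Iic]
  have hcT : T.card = n - i.val := by
    rw [hTdef, Finset.card_image_of_injective _ (Equiv.injective _), Fin.card_Ici]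
  have hle : (S ∪ T).card ≤ n := by
    have := Finset.card_le_univ (S ∪ T)
    simpa using this
  rw [Finset.card_union_of_disjoint hdisj, hcS, hcT] at hle
  have := i.isLt
  omega

/-! ### Parity lemmas -/

lemma pat_flip {a b : ℕ} (h1 : b ≤ a) (h2 : a ≤ b + 1) :
    decide (b % 2 = 1) = xor (decide (a % 2 = 1)) (decide (b < a)) := by
  rcases eq_or_lt_of_le h1 with h | h
  · subst h; simp
  · have ha : a = b + 1 := by omega
    rw [show decide (b < a) = true by simpa using h, Bool.xor_true, ← decide_not]
    exact decide_eq_decide.mpr (by omega)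

lemma card_filter_perm {n : ℕ} (σ : Equiv.Perm (Fin n)) (p : Fin n → Prop)
    [DecidablePred p] :
    (Finset.univ.filter fun i => p (σ i)).card = (Finset.univ.filter p).card := by
  apply Finset.card_bij (fun i _ => σ i)
  · intro a ha
    simp only [Finset.mem_filter, Finset.mem_univ, true_and] at ha ⊢
    exact ha
  · intro a _ b _ hab
    exact σ.injective hab
  · intro b hb
    refine ⟨σ.symm b, ?_, by simp⟩
    simp only [Finset.mem_filter, Finset.mem_univ, true_and] at hb ⊢
    simpa using hb

lemma card_dec {n : ℕ} {z u : Fin n → ℕ} (h : ∀ i, z i ≤ u i ∧ u i ≤ z i + 1) :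
    (Finset.univ.filter fun i => z i < u i).card + ∑ i, z i = ∑ i, u i := by
  rw [Finset.card_filter, ← Finset.sum_add_distrib]
  apply Finset.sum_congr rfl
  intro i _
  have := h i
  split_ifs with hi <;> omega

/-! ### The two key strategy lemmas -/

lemma not_P_of_move {x y : Fin 6 → ℕ} (hP : Pp x) (hy : MooreMove 6 3 x y) : ¬ Pp y := by
  classical
  obtain ⟨h1, hc1, hc2⟩ := hy
  set σ := Tuple.sort x with hσ
  set u := x ∘ σ with hu
  have hum : Monotone u := Tuple.monotone_sort x
  set w := y ∘ σ with hwdef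
  have hw : ∀ i, w i ≤ u i ∧ u i ≤ w i + 1 := fun i => h1 (σ i)
  set z := w ∘ Tuple.sort w with hz
  have hzm : Monotone z := Tuple.monotone_sort w
  have hz1 : ∀ i, z i ≤ u i := by
    intro i
    have h' := sorted_le_sorted (a := w) (b := u) (fun j => (hw j).1) i
    rwa [comp_sort_self hum] at h'
  have hz2 : ∀ i, u i ≤ z i + 1 := by
    intro i
    have h' := sorted_le_sorted (a := u) (b := fun t => w t + 1) (fun j => (hw j).2) i
    rw [comp_sort_self hum] at h'
    have heq : (fun t => w t + 1) ∘ Tuple.sort (fun t => w t + 1)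
        = (fun t => w t + 1) ∘ (Tuple.sort w : Equiv.Perm (Fin 6)) := by
      apply sort_comp_eq
      intro a b hab
      simp only [Function.comp_apply]
      exact Nat.add_le_add_right (hzm hab) 1
    rw [heq] at h'
    exact h'
  -- counting
  have e1 := card_dec (fun i => ⟨hz1 i, hz2 i⟩)
  have e2 := card_dec hw
  have e3 : ∑ i, z i = ∑ i, w i := Equiv.sum_comp (Tuple.sort w) w
  have e6 : (Finset.univ.filter fun i => w i < u i).card
      = (Finset.univ.filter fun i => y i < x i).card :=
    card_filter_perm σ (fun i => y i < x i)
  have ecard : (Finset.univ.filter fun i => z i < u i).card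
      = (Finset.univ.filter fun i => y i < x i).card := by omega
  set D : Fin 6 → Bool := fun i => decide (z i < u i) with hD
  have hcntD : cnt D = (Finset.univ.filter fun i => z i < u i).card := by
    rw [cnt_eq_card D]
    congr 1
    apply Finset.filter_congr
    intro i _
    simp [hD]
  have hflip : patOf z = fun i => xor (patOf u i) (D i) := by
    funext i
    exact pat_flip (hz1 i) (hz2 i)
  -- y ∘ sort y = z
  have hys : y ∘ Tuple.sort y = z := by
    have hcoe : y ∘ ⇑((Tuple.sort w).trans σ) = z := by
      rw [Equiv.coe_trans]
      rfl
    rw [sort_comp_eq y ((Tuple.sort w).trans σ) (by rw [hcoe]; exact hzm)]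
    exact hcoe
  intro hPy
  have hPy' : ppat (patOf z) = true := by
    have : ppat (patOf (y ∘ Tuple.sort y)) = true := hPy
    rwa [hys] at this
  rw [hflip] at hPy'
  exact lemA (patOf u) D hP (by omega) (by omega) hPy'

lemma exists_move_to_P (x : Fin 6 → ℕ) (hnp : ¬ Pp x) :
    ∃ y, MooreMove 6 3 x y ∧ Pp y := by
  classical
  set σ := Tuple.sort x with hσ
  set u := x ∘ σ with hu
  have hum : Monotone u := Tuple.monotone_sort x
  set q := patOf u with hq
  set eqb : Fin 5 → Bool := fun i => decide (u i.castSucc = u i.succ) with heqb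
  set zb : Fin 6 → Bool := fun i => decide (u i = 0) with hzb
  have hcs : ∀ i : Fin 5, u i.castSucc ≤ u i.succ :=
    fun i => hum (Fin.castSucc_le_succ i)
  have hb1 : ∀ i : Fin 5, zb i.succ = true → zb i.castSucc = true := by
    intro i hi
    simp only [hzb, decide_eq_true_eq] at hi ⊢
    have := hcs i
    omega
  have hb2 : ∀ i : Fin 5, zb i.castSucc = true → zb i.succ = true → eqb i = true := by
    intro i hi1 hi2
    simp only [hzb, decide_eq_true_eq] at hi1 hi2
    simp only [heqb, decide_eq_true_eq]
    omega
  have hb3 : ∀ i : Fin 5, zb i.castSucc = true → eqb i = true → zb i.succ = true := by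
    intro i hi1 hi2
    simp only [hzb, decide_eq_true_eq] at hi1 ⊢
    simp only [heqb, decide_eq_true_eq] at hi2
    omega
  have hb4 : ∀ i : Fin 6, zb i = true → q i = false := by
    intro i hi
    simp only [hzb, decide_eq_true_eq] at hi
    simp [hq, patOf, hi]
  have hb5 : ∀ i : Fin 5, eqb i = true → q i.castSucc = q i.succ := by
    intro i hi
    simp only [heqb, decide_eq_true_eq] at hi
    simp [hq, patOf, hi]
  have hnq : ¬ (ppat q = true) := hnp
  obtain ⟨D, hD1, hD2, hD3, hD4, hD5⟩ := lemB zb hb1 eqb hb2 hb3 q hb4 hb5 hnq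
  have hupos : ∀ i, D i = true → 1 ≤ u i := by
    intro i hi
    have := hD4 i hi
    simp only [hzb, decide_eq_false_iff_not] at this
    omega
  set z : Fin 6 → ℕ := fun i => u i - (D i).toNat with hzdef
  have hzu : ∀ i, z i ≤ u i ∧ u i ≤ z i + 1 := by
    intro i
    cases hi : D i <;> simp only [hzdef, hi, Bool.toNat_false, Bool.toNat_true]
    · omega
    · have := hupos i hi
      omega
  have hzm : Monotone z := by
    rw [Fin.monotone_iff_le_succ]
    intro i
    have hle := hcs i
    cases hsucc : D i.succ with
    | false =>
      have := (hzu i.castSucc).1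
      simp only [hzdef, hsucc, Bool.toNat_false]
      omega
    | true =>
      have hpos := hupos _ hsucc
      cases hcast : D i.castSucc with
      | true =>
        simp only [hzdef, hsucc, hcast, Bool.toNat_true]
        omega
      | false =>
        have hne : u i.castSucc ≠ u i.succ := by
          intro he
          have he' : eqb i = true := by simp [heqb, he]
          have := hD5 i he' hsucc
          rw [this] at hcast
          cases hcast
        simp only [hzdef, hsucc, hcast, Bool.toNat_true, Bool.toNat_false]
        omega
  set y : Fin 6 → ℕ := fun i => z (σ.symm i) with hydef
  have hxy : ∀ i, x i = u (σ.symm i) := by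
    intro i
    simp only [hu, Function.comp_apply, hσ]
    rw [Equiv.apply_symm_apply]
  have hfilter : (Finset.univ.filter fun i => y i < x i)
      = (Finset.univ.filter fun i => z (σ.symm i) < u (σ.symm i)) := by
    apply Finset.filter_congr
    intro i _
    rw [hxy i]
  have hcard : (Finset.univ.filter fun i => y i < x i).card = cnt D := by
    rw [hfilter, card_filter_perm σ.symm (fun j => z j < u j), cnt_eq_card D]
    congr 1
    apply Finset.filter_congr
    intro i _
    cases hi : D i <;> simp only [hzdef, hi, Bool.toNat_false, Bool.toNat_true]
    · simp
    · have := hupos i hi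
      simp only [decide_eq_true_eq, iff_true]
      omega
  have hmove : MooreMove 6 3 x y := by
    refine ⟨?_, ?_, ?_⟩
    · intro i
      have := hzu (σ.symm i)
      rw [hxy i]
      exact this
    · rw [hcard]; exact hD1
    · rw [hcard]; exact hD2
  refine ⟨y, hmove, ?_⟩
  have hyz : y ∘ ⇑σ = z := by
    funext j
    simp only [hydef, Function.comp_apply, Equiv.symm_apply_apply]
  have hys : y ∘ Tuple.sort y = z := by
    rw [sort_comp_eq y σ (by rw [hyz]; exact hzm)]
    exact hyz
  have hpz : patOf z = fun i => xor (q i) (D i) := by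
    funext i
    cases hi : D i with
    | false =>
      simp only [hzdef, patOf, hi, Bool.toNat_false, Nat.sub_zero, Bool.xor_false]
      rfl
    | true =>
      have hpos := hupos i hi
      simp only [hzdef, patOf, hq, hi, Bool.toNat_true, Bool.xor_true]
      rw [← decide_not]
      exact decide_eq_decide.mpr (by omega)
  show ppat (patOf (y ∘ Tuple.sort y)) = true
  rw [hys, hpz]
  exact hD3

/-! ### Main induction -/

lemma mooreG_zero_iff_Pp : ∀ (N : ℕ) (x : Fin 6 → ℕ), ∑ i, x i ≤ N →
    (mooreG 6 3 x = 0 ↔ Pp x) := by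
  intro N
  induction N using Nat.strong_induction_on with
  | _ N ih =>
    intro x hN
    rw [mooreG_eq_zero_iff]
    constructor
    · intro h
      by_contra hnp
      obtain ⟨y, hy, hPy⟩ := exists_move_to_P x hnp
      have hlt : ∑ i, y i < N := lt_of_lt_of_le hy.sum_lt hN
      exact h y hy ((ih _ hlt y le_rfl).mpr hPy)
    · intro hP y hy
      have hlt : ∑ i, y i < N := lt_of_lt_of_le hy.sum_lt hN
      intro h0
      exact not_P_of_move hP hy ((ih _ hlt y le_rfl).mp h0)

/-- In `Nim¹_{6,≤3}`, a nondecreasing position is a P-position of normal play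
iff its parity vector is one of `(e,e,e,e,e,e)`, `(e,e,o,o,o,o)`,
`(o,o,e,e,o,o)`, `(o,o,o,o,e,e)`. -/
theorem stmt6 (x : Fin 6 → ℕ) (hx : Monotone x) :
    mooreG 6 3 x = 0 ↔
      ((Even (x 0) ∧ Even (x 1) ∧ Even (x 2) ∧ Even (x 3) ∧ Even (x 4) ∧ Even (x 5)) ∨
       (Even (x 0) ∧ Even (x 1) ∧ Odd (x 2) ∧ Odd (x 3) ∧ Odd (x 4) ∧ Odd (x 5)) ∨
       (Odd (x 0) ∧ Odd (x 1) ∧ Even (x 2) ∧ Even (x 3) ∧ Odd (x 4) ∧ Odd (x 5)) ∨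
       (Odd (x 0) ∧ Odd (x 1) ∧ Odd (x 2) ∧ Odd (x 3) ∧ Even (x 4) ∧ Even (x 5))) := by
  rw [mooreG_zero_iff_Pp (∑ i, x i) x le_rfl]
  unfold Pp
  rw [comp_sort_self hx]
  have he : ∀ i, Even (x i) ↔ patOf x i = false := by
    intro i
    simp only [patOf, decide_eq_false_iff_not, Nat.even_iff]
    omega
  have ho : ∀ i, Odd (x i) ↔ patOf x i = true := by
    intro i
    simp only [patOf, decide_eq_true_eq, Nat.odd_iff]
  simp only [he, ho]
  generalize patOf x = p
  revert p
  decide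
end

section
/- For every n ≥ 1 and every k with n − 1 ≤ k ≤ n, the game Nim^1_{n,≤k} (slow Moore's Nim) is tame: every position x satisfies either (G(x), G⁻(x)) = (0, 1), or (G(x), G⁻(x)) = (1, 0), or G(x) = G⁻(x). -/
open Classical in
/-- The misère Sprague–Grundy function of slow Moore's Nim: the same `mex`
recursion at nonterminal positions, and value `1` at terminal positions. -/
noncomputable def mooreGm (n k : ℕ) (x : Fin n → ℕ) : ℕ :=
  if ∃ y, MooreMove n k x y then
    mex (Set.range fun y : {y : Fin n → ℕ // MooreMove n k x y} => mooreGm n k y.1)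
  else 1
termination_by ∑ i, x i
decreasing_by exact y.2.sum_lt


lemma mooreG_def (n k : ℕ) (x : Fin n → ℕ) :
    mooreG n k x = mex {g | ∃ y, MooreMove n k x y ∧ mooreG n k y = g} := by
  rw [mooreG]
  congr 1
  ext g
  constructor
  · rintro ⟨⟨y, hy⟩, rfl⟩; exact ⟨y, hy, rfl⟩
  · rintro ⟨y, hy, rfl⟩; exact ⟨⟨y, hy⟩, rfl⟩

lemma mooreGm_def_pos {n k : ℕ} {x : Fin n → ℕ} (h : ∃ y, MooreMove n k x y) :
    mooreGm n k x = mex {g | ∃ y, MooreMove n k x y ∧ mooreGm n k y = g} := by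
  rw [mooreGm, if_pos h]
  congr 1
  ext g
  constructor
  · rintro ⟨⟨y, hy⟩, rfl⟩; exact ⟨y, hy, rfl⟩
  · rintro ⟨y, hy, rfl⟩; exact ⟨⟨y, hy⟩, rfl⟩

lemma mooreGm_def_neg {n k : ℕ} {x : Fin n → ℕ} (h : ¬ ∃ y, MooreMove n k x y) :
    mooreGm n k x = 1 := by
  rw [mooreGm, if_neg h]

section Infra
variable {n k : ℕ}

lemma mex_eq_zero {S : Set ℕ} (h : 0 ∉ S) : mex S = 0 :=
  Nat.sInf_eq_zero.2 (Or.inl h)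

lemma mex_eq_one {S : Set ℕ} (h0 : 0 ∈ S) (h1 : 1 ∉ S) : mex S = 1 := by
  have hne : ({m | m ∉ S} : Set ℕ).Nonempty := ⟨1, h1⟩
  have hmem : mex S ∉ S := Nat.sInf_mem hne
  have hle : mex S ≤ 1 := Nat.sInf_le h1
  have h0' : mex S ≠ 0 := fun h => hmem (h ▸ h0)
  omega

lemma mex_le {S : Set ℕ} {c : ℕ} (h : c ∉ S) : mex S ≤ c := Nat.sInf_le h

lemma two_le_mex {S : Set ℕ} (h0 : 0 ∈ S) (h1 : 1 ∈ S) {c : ℕ} (hc : c ∉ S) :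
    2 ≤ mex S := by
  have hne : ({m | m ∉ S} : Set ℕ).Nonempty := ⟨c, hc⟩
  have hmem : mex S ∉ S := Nat.sInf_mem hne
  have e0 : mex S ≠ 0 := fun h => hmem (h ▸ h0)
  have e1 : mex S ≠ 1 := fun h => hmem (h ▸ h1)
  omega

lemma mex_ne_zero_of_mem {S : Set ℕ} (h0 : 0 ∈ S) {c : ℕ} (hc : c ∉ S) :
    mex S ≠ 0 := by
  have hne : ({m | m ∉ S} : Set ℕ).Nonempty := ⟨c, hc⟩
  have hmem : mex S ∉ S := Nat.sInf_mem hne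
  exact fun h => hmem (h ▸ h0)

/-- Grundy values are bounded by the total sum. -/
lemma mooreG_le_sum (n k : ℕ) :
    ∀ (N : ℕ) (x : Fin n → ℕ), ∑ i, x i ≤ N → mooreG n k x ≤ ∑ i, x i := by
  intro N
  induction N with
  | zero =>
    intro x hx
    rw [mooreG_def]
    apply mex_le
    rintro ⟨y, hy, -⟩
    have := hy.sum_lt
    omega
  | succ N ih =>
    intro x hx
    rw [mooreG_def]
    apply mex_le
    rintro ⟨y, hy, hg⟩
    have h1 := hy.sum_lt
    have h2 := ih y (by omega)
    omega

lemma mooreGm_le_sum (n k : ℕ) :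
    ∀ (N : ℕ) (x : Fin n → ℕ), ∑ i, x i ≤ N → mooreGm n k x ≤ ∑ i, x i + 1 := by
  intro N
  induction N with
  | zero =>
    intro x hx
    by_cases h : ∃ y, MooreMove n k x y
    · obtain ⟨y, hy⟩ := h
      have := hy.sum_lt; omega
    · rw [mooreGm_def_neg h]; omega
  | succ N ih =>
    intro x hx
    by_cases h : ∃ y, MooreMove n k x y
    · rw [mooreGm_def_pos h]
      apply mex_le
      rintro ⟨y, hy, hg⟩
      have h1 := hy.sum_lt
      have h2 := ih y (by omega)
      omega
    · rw [mooreGm_def_neg h]; omega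

/-- value-characterization helpers for `mooreG` -/
lemma mooreG_eq_zero {x : Fin n → ℕ}
    (h : ∀ y, MooreMove n k x y → mooreG n k y ≠ 0) : mooreG n k x = 0 := by
  rw [mooreG_def]
  exact mex_eq_zero (by rintro ⟨y, hy, h0⟩; exact h y hy h0)

lemma mooreG_eq_one {x : Fin n → ℕ}
    (h0 : ∃ y, MooreMove n k x y ∧ mooreG n k y = 0)
    (h1 : ∀ y, MooreMove n k x y → mooreG n k y ≠ 1) : mooreG n k x = 1 := by
  rw [mooreG_def]
  exact mex_eq_one h0 (by rintro ⟨y, hy, hg⟩; exact h1 y hy hg)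

lemma mooreG_ne_zero {x : Fin n → ℕ}
    (h0 : ∃ y, MooreMove n k x y ∧ mooreG n k y = 0) : mooreG n k x ≠ 0 := by
  rw [mooreG_def]
  apply mex_ne_zero_of_mem h0 (c := ∑ i, x i)
  rintro ⟨y, hy, hg⟩
  have h1 := hy.sum_lt
  have h2 := mooreG_le_sum n k (∑ i, y i) y le_rfl
  omega

lemma two_le_mooreG {x : Fin n → ℕ}
    (h0 : ∃ y, MooreMove n k x y ∧ mooreG n k y = 0)
    (h1 : ∃ y, MooreMove n k x y ∧ mooreG n k y = 1) : 2 ≤ mooreG n k x := by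
  rw [mooreG_def]
  apply two_le_mex h0 h1 (c := ∑ i, x i)
  rintro ⟨y, hy, hg⟩
  have ha := hy.sum_lt
  have hb := mooreG_le_sum n k (∑ i, y i) y le_rfl
  omega

lemma mooreGm_eq_zero {x : Fin n → ℕ} (hm : ∃ y, MooreMove n k x y)
    (h : ∀ y, MooreMove n k x y → mooreGm n k y ≠ 0) : mooreGm n k x = 0 := by
  rw [mooreGm_def_pos hm]
  exact mex_eq_zero (by rintro ⟨y, hy, h0⟩; exact h y hy h0)

lemma mooreGm_eq_one {x : Fin n → ℕ} (hm : ∃ y, MooreMove n k x y)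
    (h0 : ∃ y, MooreMove n k x y ∧ mooreGm n k y = 0)
    (h1 : ∀ y, MooreMove n k x y → mooreGm n k y ≠ 1) : mooreGm n k x = 1 := by
  rw [mooreGm_def_pos hm]
  exact mex_eq_one h0 (by rintro ⟨y, hy, hg⟩; exact h1 y hy hg)

lemma mooreG_eq_mooreGm {x : Fin n → ℕ} (hm : ∃ y, MooreMove n k x y)
    (h : ∀ g, (∃ y, MooreMove n k x y ∧ mooreG n k y = g) ↔
              (∃ y, MooreMove n k x y ∧ mooreGm n k y = g)) :
    mooreG n k x = mooreGm n k x := by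
  rw [mooreG_def, mooreGm_def_pos hm]
  congr 1
  ext g
  exact h g

/-- decrement positions by one on a finite set of coordinates -/
def nimDec (x : Fin n → ℕ) (S : Finset (Fin n)) : Fin n → ℕ :=
  fun i => x i - (if i ∈ S then 1 else 0)

lemma nimDec_mem {x : Fin n → ℕ} {S : Finset (Fin n)} {i : Fin n} (h : i ∈ S) :
    nimDec x S i = x i - 1 := by simp [nimDec, h]

lemma nimDec_notMem {x : Fin n → ℕ} {S : Finset (Fin n)} {i : Fin n} (h : i ∉ S) :
    nimDec x S i = x i := by simp [nimDec, h]

lemma nimDec_move {x : Fin n → ℕ} {S : Finset (Fin n)}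
    (hpos : ∀ i ∈ S, 1 ≤ x i) (h1 : S.Nonempty) (h2 : S.card ≤ k) :
    MooreMove n k x (nimDec x S) := by
  have hfil : Finset.univ.filter (fun i => nimDec x S i < x i) = S := by
    ext i
    simp only [Finset.mem_filter, Finset.mem_univ, true_and]
    by_cases h : i ∈ S
    · have := hpos i h
      simp [nimDec_mem h, h]
      omega
    · simp [nimDec_notMem h, h]
  refine ⟨fun i => ?_, ?_, ?_⟩
  · by_cases h : i ∈ S
    · rw [nimDec_mem h]; omega
    · rw [nimDec_notMem h]; omega
  · rw [hfil]; exact Finset.card_pos.2 h1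
  · rw [hfil]; exact h2

lemma move_dest {x y : Fin n → ℕ} (h : MooreMove n k x y) :
    ∃ S : Finset (Fin n), (∀ i ∈ S, 1 ≤ x i) ∧ S.Nonempty ∧ S.card ≤ k ∧
      (∀ i ∈ S, y i = x i - 1) ∧ (∀ i, i ∉ S → y i = x i) := by
  obtain ⟨hb, hc1, hc2⟩ := h
  refine ⟨Finset.univ.filter (fun i => y i < x i), ?_, Finset.card_pos.1 hc1, hc2, ?_, ?_⟩
  · intro i hi
    rw [Finset.mem_filter] at hi
    omega
  · intro i hi
    rw [Finset.mem_filter] at hi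
    have := hb i
    omega
  · intro i hi
    rw [Finset.mem_filter] at hi
    have := hb i
    simp only [Finset.mem_univ, true_and] at hi
    omega

end Infra

section KN
variable {n : ℕ}

/-- extreme positions for `k = n`: at most one nonzero coordinate. -/
def Ext0 (x : Fin n → ℕ) : Prop := ∃ j, ∀ i, i ≠ j → x i = 0

lemma swap0 {x y : Fin n → ℕ} (hnE : ¬ Ext0 x) (hy : MooreMove n n x y)
    {j : Fin n} (hj : ∀ i, i ≠ j → y i = 0) :
    ∃ z, MooreMove n n x z ∧ ∃ j', (∀ i, i ≠ j' → z i = 0) ∧ z j' % 2 ≠ y j % 2 := by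
  obtain ⟨S, hSpos, hSne, hSc, hS1, hS2⟩ := move_dest hy
  have hxi : ∀ i, i ≠ j → i ∈ S → x i = 1 := by
    intro i hij hiS
    have := hS1 i hiS; have := hSpos i hiS; have := hj i hij; omega
  have hxo : ∀ i, i ≠ j → i ∉ S → x i = 0 := by
    intro i hij hiS
    have := hS2 i hiS; have := hj i hij; omega
  by_cases hjS : j ∈ S
  · -- drop j from S
    have hyj : y j = x j - 1 := hS1 j hjS
    have hxj : 1 ≤ x j := hSpos j hjS
    have hne : (S.erase j).Nonempty := by
      rcases Finset.eq_empty_or_nonempty (S.erase j) with h | h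
      · exfalso
        apply hnE
        refine ⟨j, fun i hij => ?_⟩
        by_cases hiS : i ∈ S
        · exact absurd (Finset.mem_erase.2 ⟨hij, hiS⟩) (by simp [h])
        · exact hxo i hij hiS
      · exact h
    refine ⟨nimDec x (S.erase j), nimDec_move (fun i hi => hSpos i (Finset.mem_of_mem_erase hi))
      hne (le_trans (Finset.card_le_card (Finset.erase_subset _ _)) hSc), j, ?_, ?_⟩
    · intro i hij
      by_cases hiS : i ∈ S
      · rw [nimDec_mem (Finset.mem_erase.2 ⟨hij, hiS⟩)]
        have := hxi i hij hiS; omega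
      · rw [nimDec_notMem (fun h => hiS (Finset.mem_of_mem_erase h))]
        exact hxo i hij hiS
    · rw [nimDec_notMem (fun h => (Finset.mem_erase.1 h).1 rfl)]
      omega
  · have hyj : y j = x j := hS2 j hjS
    have hSj : ∀ i ∈ S, i ≠ j := fun i hi h => hjS (h ▸ hi)
    by_cases hxj : 1 ≤ x j
    · -- add j to S
      refine ⟨nimDec x (insert j S), nimDec_move ?_ ⟨j, Finset.mem_insert_self _ _⟩
        (Finset.card_le_univ _ |>.trans (by simp)), j, ?_, ?_⟩
      · intro i hi
        rcases Finset.mem_insert.1 hi with h | h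
        · exact h ▸ hxj
        · exact hSpos i h
      · intro i hij
        by_cases hiS : i ∈ S
        · rw [nimDec_mem (Finset.mem_insert_of_mem hiS)]
          have := hxi i hij hiS; omega
        · rw [nimDec_notMem (by simp [hij, hiS])]
          exact hxo i hij hiS
      · rw [nimDec_mem (Finset.mem_insert_self _ _)]
        omega
    · -- x j = 0, y j = 0; S has ≥ 2 elements, all equal to 1
      have hxj0 : x j = 0 := by omega
      have hcard : 2 ≤ S.card := by
        by_contra h
        apply hnE
        obtain ⟨i1, hi1⟩ := hSne
        have hSsub : S = {i1} := by
          apply Finset.eq_singleton_iff_unique_mem.2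
          refine ⟨hi1, fun i hi => ?_⟩
          by_contra hne
          have : 2 ≤ S.card := Finset.one_lt_card.2 ⟨i, hi, i1, hi1, hne⟩
          omega
        refine ⟨i1, fun i hii => ?_⟩
        by_cases hij : i = j
        · exact hij ▸ hxj0
        · exact hxo i hij (by simp [hSsub, hii])
      obtain ⟨t0, ht0⟩ := hSne
      have hne : (S.erase t0).Nonempty := by
        rw [← Finset.card_pos, Finset.card_erase_of_mem ht0]; omega
      have ht0j : t0 ≠ j := hSj t0 ht0
      refine ⟨nimDec x (S.erase t0), nimDec_move (fun i hi => hSpos i (Finset.mem_of_mem_erase hi))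
        hne (le_trans (Finset.card_le_card (Finset.erase_subset _ _)) hSc), t0, ?_, ?_⟩
      · intro i hit
        by_cases hij : i = j
        · subst hij
          rw [nimDec_notMem (fun h => hjS (Finset.mem_of_mem_erase h))]
          exact hxj0
        · by_cases hiS : i ∈ S
          · rw [nimDec_mem (Finset.mem_erase.2 ⟨hit, hiS⟩)]
            have := hxi i hij hiS; omega
          · rw [nimDec_notMem (fun h => hiS (Finset.mem_of_mem_erase h))]
            exact hxo i hij hiS
      · rw [nimDec_notMem (fun h => (Finset.mem_erase.1 h).1 rfl)]
        have := hxi t0 ht0j ht0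
        omega

lemma main_n (hn : 1 ≤ n) :
    ∀ (N : ℕ) (x : Fin n → ℕ), ∑ i, x i ≤ N →
      ((∀ j, (∀ i, i ≠ j → x i = 0) →
        (mooreG n n x = x j % 2 ∧ mooreGm n n x = 1 - x j % 2)) ∧
       (¬ Ext0 x → mooreG n n x = mooreGm n n x)) := by
  intro N
  induction N using Nat.strong_induction_on with
  | _ N ih =>
  intro x hx
  have IH : ∀ y, MooreMove n n x y →
      ((∀ j, (∀ i, i ≠ j → y i = 0) →
        (mooreG n n y = y j % 2 ∧ mooreGm n n y = 1 - y j % 2)) ∧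
       (¬ Ext0 y → mooreG n n y = mooreGm n n y)) := by
    intro y hy
    have := hy.sum_lt
    exact ih (∑ i, y i) (by omega) y le_rfl
  constructor
  · intro j hj
    by_cases hterm : x j = 0
    · -- terminal position
      have hall : ∀ i, x i = 0 := by
        intro i; by_cases h : i = j
        · exact h ▸ hterm
        · exact hj i h
      have hnomove : ¬ ∃ y, MooreMove n n x y := by
        rintro ⟨y, hy⟩
        obtain ⟨S, hSpos, ⟨i, hi⟩, -⟩ := move_dest hy
        have := hSpos i hi; have := hall i; omega
      refine ⟨?_, ?_⟩
      · rw [hterm]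
        exact mooreG_eq_zero (fun y hy _ => hnomove ⟨y, hy⟩)
      · rw [hterm, mooreGm_def_neg hnomove]
    · -- unique option: decrease coordinate j
      have hxj : 1 ≤ x j := by omega
      have hmem : j ∈ ({j} : Finset (Fin n)) := Finset.mem_singleton_self j
      have hy0 : MooreMove n n x (nimDec x {j}) :=
        nimDec_move (fun i hi => (Finset.mem_singleton.1 hi) ▸ hxj) ⟨j, hmem⟩
          (by simp; omega)
      have huniq : ∀ y, MooreMove n n x y → y = nimDec x {j} := by
        intro y hy
        obtain ⟨S, hSpos, ⟨i0, hi0⟩, hSc, hS1, hS2⟩ := move_dest hy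
        have hSsub : ∀ i ∈ S, i = j := by
          intro i hi
          by_contra h
          have := hSpos i hi; have := hj i h; omega
        have hSeq : S = {j} := by
          apply Finset.eq_singleton_iff_unique_mem.2
          exact ⟨(hSsub i0 hi0) ▸ hi0, hSsub⟩
        funext i
        by_cases h : i ∈ S
        · rw [hS1 i h, nimDec_mem (hSeq ▸ h)]
        · rw [hS2 i h, nimDec_notMem (hSeq ▸ h)]
      have hextz : ∀ i, i ≠ j → nimDec x {j} i = 0 := by
        intro i hi
        rw [nimDec_notMem (by simp [hi])]
        exact hj i hi
      have hzj : nimDec x {j} j = x j - 1 := nimDec_mem hmem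
      have hpair := (IH _ hy0).1 j hextz
      have hGz : mooreG n n (nimDec x {j}) = (x j - 1) % 2 := by rw [hpair.1, hzj]
      have hGmz : mooreGm n n (nimDec x {j}) = 1 - (x j - 1) % 2 := by rw [hpair.2, hzj]
      constructor
      · rcases Nat.even_or_odd (x j) with he | ho
        · have h2 : x j % 2 = 0 := Nat.even_iff.1 he
          rw [h2]
          apply mooreG_eq_zero
          intro y hy
          rw [huniq y hy, hGz]
          omega
        · have h2 : x j % 2 = 1 := Nat.odd_iff.1 ho
          rw [h2]
          apply mooreG_eq_one
          · exact ⟨_, hy0, by rw [hGz]; omega⟩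
          · intro y hy
            rw [huniq y hy, hGz]
            omega
      · rcases Nat.even_or_odd (x j) with he | ho
        · have h2 : x j % 2 = 0 := Nat.even_iff.1 he
          rw [h2]
          apply mooreGm_eq_one ⟨_, hy0⟩
          · exact ⟨_, hy0, by rw [hGmz]; omega⟩
          · intro y hy
            rw [huniq y hy, hGmz]
            omega
        · have h2 : x j % 2 = 1 := Nat.odd_iff.1 ho
          rw [h2]
          apply mooreGm_eq_zero ⟨_, hy0⟩
          intro y hy
          rw [huniq y hy, hGmz]
          omega
  · intro hnE
    have hmove : ∃ y, MooreMove n n x y := by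
      by_cases hall : ∀ i, x i = 0
      · exact absurd ⟨⟨0, hn⟩, fun i _ => hall i⟩ hnE
      · push_neg at hall
        obtain ⟨i0, hi0⟩ := hall
        exact ⟨nimDec x {i0}, nimDec_move (fun i hi => by
          rw [Finset.mem_singleton] at hi; subst hi; omega)
          ⟨i0, Finset.mem_singleton_self i0⟩ (by simp; omega)⟩
    apply mooreG_eq_mooreGm hmove
    intro g
    constructor
    · rintro ⟨y, hy, rfl⟩
      by_cases hE : Ext0 y
      · obtain ⟨j, hj⟩ := hE
        have hpy := (IH y hy).1 j hj
        obtain ⟨z, hz, j', hj', hflip⟩ := swap0 hnE hy hj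
        have hpz := (IH z hz).1 j' hj'
        refine ⟨z, hz, ?_⟩
        rw [hpz.2, hpy.1]
        have : y j % 2 < 2 := Nat.mod_lt _ (by omega)
        have : z j' % 2 < 2 := Nat.mod_lt _ (by omega)
        omega
      · exact ⟨y, hy, ((IH y hy).2 hE).symm⟩
    · rintro ⟨y, hy, rfl⟩
      by_cases hE : Ext0 y
      · obtain ⟨j, hj⟩ := hE
        have hpy := (IH y hy).1 j hj
        obtain ⟨z, hz, j', hj', hflip⟩ := swap0 hnE hy hj
        have hpz := (IH z hz).1 j' hj'
        refine ⟨z, hz, ?_⟩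
        rw [hpz.1, hpy.2]
        have : y j % 2 < 2 := Nat.mod_lt _ (by omega)
        have : z j' % 2 < 2 := Nat.mod_lt _ (by omega)
        omega
      · exact ⟨y, hy, (IH y hy).2 hE⟩

end KN

section KN1
variable {n : ℕ}

/-- extreme positions for `k = n-1`: at least `n-1` coordinates equal to the minimum. -/
def ExtP (x : Fin n → ℕ) : Prop := ∃ j a, (∀ i, i ≠ j → x i = a) ∧ a ≤ x j

/-- all coordinates have the same parity -/
def Par0 (x : Fin n → ℕ) : Prop := ∀ i j : Fin n, x i % 2 = x j % 2

/-- the auxiliary class of positions with Grundy value `≥ 2`. -/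
def QP (x : Fin n → ℕ) : Prop :=
  ¬ ExtP x ∧ ∃ v j, (∀ i, i ≠ j → x i = v ∨ x i = v + 1) ∧ v ≤ x j

lemma fin_exists_ne (hn : 2 ≤ n) (j : Fin n) : ∃ i, i ≠ j := by
  by_cases h : j = ⟨0, by omega⟩
  · exact ⟨⟨1, by omega⟩, by subst h; simp [Fin.ext_iff]⟩
  · exact ⟨⟨0, by omega⟩, fun hh => h hh.symm⟩

lemma fin_exists_ne_ne (hn : 3 ≤ n) (j j' : Fin n) : ∃ i, i ≠ j ∧ i ≠ j' := by
  have hne : ({j, j'} : Finset (Fin n)) ≠ Finset.univ := by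
    intro h
    have h1 : ({j, j'} : Finset (Fin n)).card ≤ 2 := by
      apply le_trans (Finset.card_insert_le _ _); simp
    rw [h, Finset.card_univ, Fintype.card_fin] at h1
    omega
  obtain ⟨i, -, hi⟩ := Finset.exists_of_ssubset
    (Finset.ssubset_iff_subset_ne.2 ⟨Finset.subset_univ _, hne⟩)
  simp only [Finset.mem_insert, Finset.mem_singleton, not_or] at hi
  exact ⟨i, hi.1, hi.2⟩

lemma fin_two_complete (hn2 : n = 2) {i0 j : Fin n} (hne : i0 ≠ j) :
    ∀ i : Fin n, i = i0 ∨ i = j := by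
  intro i
  have h1 : i.val < n := i.isLt
  have h2 : i0.val < n := i0.isLt
  have h3 : j.val < n := j.isLt
  have h4 : i0.val ≠ j.val := fun h => hne (Fin.ext h)
  rw [Fin.ext_iff, Fin.ext_iff]
  omega

lemma card_erase_univ (j : Fin n) : (Finset.univ.erase j).card = n - 1 := by
  rw [Finset.card_erase_of_mem (Finset.mem_univ j), Finset.card_univ, Fintype.card_fin]

lemma ext_of_two (hn2 : n = 2) (x : Fin n → ℕ) : ExtP x := by
  have h0 : (0:ℕ) < n := by omega
  have h1 : (1:ℕ) < n := by omega
  set i0 : Fin n := ⟨0, h0⟩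
  set i1 : Fin n := ⟨1, h1⟩
  have hne : i0 ≠ i1 := by simp [i0, i1, Fin.ext_iff]
  by_cases h : x i0 ≤ x i1
  · refine ⟨i1, x i0, fun i hi => ?_, h⟩
    rcases fin_two_complete hn2 hne i with h' | h'
    · rw [h']
    · exact absurd h' hi
  · refine ⟨i0, x i1, fun i hi => ?_, by omega⟩
    rcases fin_two_complete hn2 hne.symm i with h' | h'
    · rw [h']
    · exact absurd h' hi

lemma par0_option {x y : Fin n → ℕ} (hn : 2 ≤ n) (hp : Par0 x)
    (hy : MooreMove n (n-1) x y) : ¬ Par0 y := by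
  obtain ⟨S, hSpos, ⟨i1, hi1⟩, hSc, hS1, hS2⟩ := move_dest hy
  obtain ⟨i2, hi2⟩ : ∃ i2, i2 ∉ S := by
    by_contra h
    push_neg at h
    have : Finset.univ ⊆ S := fun i _ => h i
    have := Finset.card_le_card this
    rw [Finset.card_univ, Fintype.card_fin] at this
    omega
  intro hpy
  have e1 := hS1 i1 hi1
  have e2 := hS2 i2 hi2
  have e3 := hSpos i1 hi1
  have e4 := hp i1 i2
  have e5 := hpy i1 i2
  omega

lemma par0_move {x : Fin n → ℕ} (hn : 2 ≤ n) (hnp : ¬ Par0 x) :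
    ∃ y, MooreMove n (n-1) x y ∧ Par0 y := by
  unfold Par0 at hnp
  push_neg at hnp
  obtain ⟨i1, i2, hne⟩ := hnp
  set S := Finset.univ.filter (fun i => x i % 2 = 1) with hS
  have hmem : ∀ i, i ∈ S ↔ x i % 2 = 1 := by
    intro i; simp [hS]
  have hodd : ∃ io, x io % 2 = 1 := by
    rcases Nat.mod_two_eq_zero_or_one (x i1) with h | h
    · exact ⟨i2, by omega⟩
    · exact ⟨i1, h⟩
  have heven : ∃ ie, x ie % 2 = 0 := by
    rcases Nat.mod_two_eq_zero_or_one (x i1) with h | h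
    · exact ⟨i1, h⟩
    · exact ⟨i2, by omega⟩
  obtain ⟨io, hio⟩ := hodd
  obtain ⟨ie, hie⟩ := heven
  have hieS : ie ∉ S := by rw [hmem]; omega
  have hcard : S.card ≤ n - 1 := by
    have hsub : S ⊆ Finset.univ.erase ie :=
      fun i hi => Finset.mem_erase.2 ⟨fun h => hieS (h ▸ hi), Finset.mem_univ i⟩
    exact le_trans (Finset.card_le_card hsub) (le_of_eq (card_erase_univ ie))
  refine ⟨nimDec x S, nimDec_move (fun i hi => by rw [hmem] at hi; omega)
    ⟨io, (hmem io).2 hio⟩ hcard, ?_⟩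
  have hall : ∀ i, nimDec x S i % 2 = 0 := by
    intro i
    by_cases h : i ∈ S
    · rw [nimDec_mem h]
      have := (hmem i).1 h
      omega
    · rw [nimDec_notMem h]
      have := (hmem i).1
      rcases Nat.mod_two_eq_zero_or_one (x i) with h' | h'
      · exact h'
      · exact absurd ((hmem i).2 h') h
  intro i j
  rw [hall i, hall j]

end KN1

section KN1B
variable {n : ℕ}

/-- classification of options of an extreme position (k = n-1):
every option is either extreme with flipped parity, or in `QP`. -/
lemma classify (hn : 2 ≤ n) {x y : Fin n → ℕ} {j : Fin n} {a : ℕ}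
    (hj : ∀ i, i ≠ j → x i = a) (ha : a ≤ x j) (hy : MooreMove n (n-1) x y) :
    (∃ j' a', (∀ i, i ≠ j' → y i = a') ∧ a' ≤ y j' ∧ (y j' - a') % 2 ≠ (x j - a) % 2)
    ∨ QP y := by
  obtain ⟨S, hSpos, hSne, hSc, hS1, hS2⟩ := move_dest hy
  set S' := S.erase j with hS'def
  have hyS : ∀ i, i ≠ j → i ∈ S → y i = a - 1 ∧ 1 ≤ a := by
    intro i hi hiS
    constructor
    · rw [hS1 i hiS, hj i hi]
    · rw [← hj i hi]; exact hSpos i hiS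
  have hyNS : ∀ i, i ≠ j → i ∉ S → y i = a := by
    intro i hi hiS
    rw [hS2 i hiS, hj i hi]
  by_cases hS'e : S' = ∅
  · -- S = {j}
    have hjS : j ∈ S := by
      obtain ⟨i0, hi0⟩ := hSne
      by_cases h : i0 = j
      · exact h ▸ hi0
      · exact absurd (Finset.mem_erase.2 ⟨h, hi0⟩) (by simp [← hS'def, hS'e])
    have hSmem : ∀ i ∈ S, i = j := by
      intro i hi
      by_contra h
      exact absurd (Finset.mem_erase.2 ⟨h, hi⟩) (by simp [← hS'def, hS'e])
    have hyj : y j = x j - 1 := hS1 j hjS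
    have hxj1 : 1 ≤ x j := hSpos j hjS
    have hyi' : ∀ i, i ≠ j → y i = a := by
      intro i hi
      exact hyNS i hi (fun h => hi (hSmem i h))
    by_cases hax : a ≤ x j - 1
    · exact Or.inl ⟨j, a, hyi', by omega, by omega⟩
    · have hxa : x j = a := by omega
      have ha1 : 1 ≤ a := by omega
      by_cases hn2 : n = 2
      · obtain ⟨i0, hi0⟩ := fin_exists_ne hn j
        left
        refine ⟨i0, a - 1, fun i hi => ?_, ?_, ?_⟩
        · rcases fin_two_complete hn2 hi0 i with h | h
          · exact absurd h hi
          · rw [h, hyj, hxa]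
        · rw [hyi' i0 hi0]; omega
        · rw [hyi' i0 hi0]; omega
      · right
        have hn3 : 3 ≤ n := by omega
        constructor
        · rintro ⟨j'', a'', h1, h2⟩
          by_cases hjj : j'' = j
          · obtain ⟨i0, hi0⟩ := fin_exists_ne hn j
            have e1 : y i0 = a'' := h1 i0 (by rw [hjj]; exact hi0)
            have e2 : y i0 = a := hyi' i0 hi0
            have e3 : a'' ≤ y j'' := h2
            have e4 : y j'' = a - 1 := by rw [hjj, hyj, hxa]
            omega
          · obtain ⟨i3, hi3j, hi3j''⟩ := fin_exists_ne_ne hn3 j j''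
            have e1 : y j = a'' := h1 j (fun h => hjj h.symm)
            have e2 : y i3 = a'' := h1 i3 hi3j''
            have e3 : y i3 = a := hyi' i3 hi3j
            have e4 : y j = a - 1 := by rw [hyj, hxa]
            omega
        · refine ⟨a - 1, j, fun i hi => Or.inr (by rw [hyi' i hi]; omega), ?_⟩
          rw [hyj, hxa]
  · have hS'ne : S'.Nonempty := Finset.nonempty_iff_ne_empty.2 hS'e
    have hS'sub : S' ⊆ Finset.univ.erase j := by
      intro i hi
      exact Finset.mem_erase.2 ⟨(Finset.mem_erase.1 hi).1, Finset.mem_univ i⟩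
    by_cases hfull : Finset.univ.erase j ⊆ S'
    · -- all coordinates except j are decreased, j is not
      have hSeq : S' = Finset.univ.erase j := Finset.Subset.antisymm hS'sub hfull
      have hjS : j ∉ S := by
        intro hjS
        have huniv : Finset.univ ⊆ S := by
          intro i _
          by_cases h : i = j
          · exact h ▸ hjS
          · exact Finset.mem_of_mem_erase (hSeq ▸ Finset.mem_erase.2 ⟨h, Finset.mem_univ i⟩)
        have := Finset.card_le_card huniv
        rw [Finset.card_univ, Fintype.card_fin] at this
        omega
      obtain ⟨i0, hi0⟩ := hS'ne
      have hi0j : i0 ≠ j := (Finset.mem_erase.1 hi0).1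
      have ha1 : 1 ≤ a := (hyS i0 hi0j (Finset.mem_of_mem_erase hi0)).2
      left
      refine ⟨j, a - 1, fun i hi => ?_, ?_, ?_⟩
      · have hiS : i ∈ S :=
          Finset.mem_of_mem_erase (hSeq ▸ Finset.mem_erase.2 ⟨hi, Finset.mem_univ i⟩)
        exact (hyS i hi hiS).1
      · rw [hS2 j hjS]; omega
      · rw [hS2 j hjS]; omega
    · -- middle case
      obtain ⟨i1, hi1⟩ := hS'ne
      obtain ⟨i2, hi2u, hi2S'⟩ : ∃ i2, i2 ∈ Finset.univ.erase j ∧ i2 ∉ S' := by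
        by_contra h
        push_neg at h
        exact hfull h
      have hi1j : i1 ≠ j := (Finset.mem_erase.1 hi1).1
      have hi1S : i1 ∈ S := Finset.mem_of_mem_erase hi1
      have hi2j : i2 ≠ j := (Finset.mem_erase.1 hi2u).1
      have hi2S : i2 ∉ S := fun h => hi2S' (Finset.mem_erase.2 ⟨hi2j, h⟩)
      have hy1 := hyS i1 hi1j hi1S
      have hy2 := hyNS i2 hi2j hi2S
      have ha1 : 1 ≤ a := hy1.2
      have hyjv : (j ∉ S ∧ y j = x j) ∨ (j ∈ S ∧ y j = x j - 1 ∧ 1 ≤ x j) := by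
        by_cases h : j ∈ S
        · exact Or.inr ⟨h, hS1 j h, hSpos j h⟩
        · exact Or.inl ⟨h, hS2 j h⟩
      by_cases hspec : j ∈ S ∧ x j = a ∧ S'.card = n - 2
      · obtain ⟨hjS, hxja, hcard⟩ := hspec
        have hyj : y j = a - 1 := by rw [hS1 j hjS, hxja]
        have hcover : ∀ i, i ≠ j → i ≠ i2 → i ∈ S' := by
          intro i hij hii2
          by_contra h
          have hiu : i ∈ Finset.univ.erase j := Finset.mem_erase.2 ⟨hij, Finset.mem_univ i⟩
          have hsub : insert i (insert i2 S') ⊆ Finset.univ.erase j := by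
            intro b hb
            rcases Finset.mem_insert.1 hb with h' | h'
            · exact h' ▸ hiu
            rcases Finset.mem_insert.1 h' with h'' | h''
            · exact h'' ▸ hi2u
            · exact hS'sub h''
          have hc1 : (insert i (insert i2 S')).card = n - 2 + 2 := by
            rw [Finset.card_insert_of_notMem, Finset.card_insert_of_notMem hi2S', hcard]
            simp only [Finset.mem_insert, not_or]
            exact ⟨hii2, h⟩
          have hc2 := card_erase_univ j
          have := Finset.card_le_card hsub
          omega
        left
        refine ⟨i2, a - 1, fun i hi => ?_, ?_, ?_⟩
        · by_cases hij : i = j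
          · exact hij ▸ hyj
          · exact (hyS i hij (Finset.mem_of_mem_erase (hcover i hij hi))).1
        · rw [hy2]; omega
        · rw [hy2]; omega
      · right
        constructor
        · rintro ⟨j'', a'', h1, h2⟩
          have hne12 : i1 ≠ i2 := fun h => hi2S (h ▸ hi1S)
          by_cases hj1 : j'' = i1
          · have e1 : y i2 = a'' := h1 i2 (fun h => hne12 (h.trans hj1).symm)
            have e2 : a'' ≤ y i1 := by rw [hj1] at h2; exact h2
            have e3 := hy1.1
            omega
          · by_cases hj2 : j'' = i2
            · have e1 : y i1 = a'' := h1 i1 (fun h => hj1 h.symm)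
              have e2 : y j = a'' := h1 j (fun h => hi2j (h.trans hj2).symm)
              have e4 : y i1 = a - 1 := hy1.1
              have h2' : a'' ≤ y i2 := by rw [hj2] at h2; exact h2
              -- y j = a - 1 forces j ∈ S and x j = a
              have hjS : j ∈ S ∧ x j = a := by
                rcases hyjv with ⟨h3, h4⟩ | ⟨h3, h4, h5⟩
                · exfalso; omega
                · refine ⟨h3, by omega⟩
              have hcover : ∀ i, i ≠ j → i ≠ i2 → i ∈ S' := by
                intro i hij hii2
                by_cases h : i ∈ S
                · exact Finset.mem_erase.2 ⟨hij, h⟩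
                · have := hyNS i hij h
                  have := h1 i (fun hh => hii2 (hh.trans hj2))
                  omega
              have hub : S'.card ≤ n - 2 := by
                have hsub : S' ⊆ (Finset.univ.erase j).erase i2 := by
                  intro b hb
                  exact Finset.mem_erase.2 ⟨fun h => hi2S' (h ▸ hb), hS'sub hb⟩
                have h4 := Finset.card_le_card hsub
                rw [Finset.card_erase_of_mem hi2u, card_erase_univ j] at h4
                omega
              have hlb : n - 2 ≤ S'.card := by
                have hsub : Finset.univ.erase j ⊆ insert i2 S' := by
                  intro b hb
                  by_cases h : b = i2
                  · exact h ▸ Finset.mem_insert_self _ _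
                  · exact Finset.mem_insert_of_mem
                      (hcover b (Finset.mem_erase.1 hb).1 h)
                have h4 := Finset.card_le_card hsub
                have h5 := Finset.card_insert_le i2 S'
                rw [card_erase_univ j] at h4
                omega
              exact hspec ⟨hjS.1, hjS.2, by omega⟩
            · have e1 : y i1 = a'' := h1 i1 (fun h => hj1 h.symm)
              have e2 : y i2 = a'' := h1 i2 (fun h => hj2 h.symm)
              have e3 := hy1.1
              omega
        · refine ⟨a - 1, j, fun i hi => ?_, ?_⟩
          · by_cases hiS : i ∈ S
            · exact Or.inl (hyS i hi hiS).1
            · exact Or.inr (by rw [hyNS i hi hiS]; omega)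
          · rcases hyjv with ⟨-, h4⟩ | ⟨-, h4, h5⟩ <;> omega

end KN1B

section KN1C
variable {n : ℕ}

/-- a nonterminal extreme position has an extreme option with flipped parity. -/
lemma ext_opt (hn : 2 ≤ n) {x : Fin n → ℕ} {j : Fin n} {a : ℕ}
    (hj : ∀ i, i ≠ j → x i = a) (ha : a ≤ x j) (hpos : ∃ i, 1 ≤ x i) :
    ∃ z, MooreMove n (n-1) x z ∧
      ∃ j' a', (∀ i, i ≠ j' → z i = a') ∧ a' ≤ z j' ∧ (z j' - a') % 2 ≠ (x j - a) % 2 := by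
  by_cases hlt : a < x j
  · refine ⟨nimDec x {j}, nimDec_move
      (fun i hi => by rw [Finset.mem_singleton] at hi; subst hi; omega)
      ⟨j, Finset.mem_singleton_self j⟩ (by simp; omega), j, a, fun i hi => ?_, ?_, ?_⟩
    · rw [nimDec_notMem (by simp [hi])]; exact hj i hi
    · rw [nimDec_mem (Finset.mem_singleton_self j)]; omega
    · rw [nimDec_mem (Finset.mem_singleton_self j)]; omega
  · have hxa : x j = a := by omega
    have ha1 : 1 ≤ a := by
      obtain ⟨i0, hi0⟩ := hpos
      by_cases h : i0 = j
      · subst h; omega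
      · rw [hj i0 h] at hi0; exact hi0
    obtain ⟨i0, hi0⟩ := fin_exists_ne hn j
    refine ⟨nimDec x (Finset.univ.erase j), nimDec_move
      (fun i hi => by rw [hj i (Finset.mem_erase.1 hi).1]; omega)
      ⟨i0, Finset.mem_erase.2 ⟨hi0, Finset.mem_univ i0⟩⟩ (le_of_eq (card_erase_univ j)),
      j, a - 1, fun i hi => ?_, ?_, ?_⟩
    · rw [nimDec_mem (Finset.mem_erase.2 ⟨hi, Finset.mem_univ i⟩), hj i hi]
    · rw [nimDec_notMem (fun h => (Finset.mem_erase.1 h).1 rfl)]; omega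
    · rw [nimDec_notMem (fun h => (Finset.mem_erase.1 h).1 rfl)]; omega

/-- a `QP` position has an extreme option of odd weight. -/
lemma q_odd_ext (hn : 2 ≤ n) {x : Fin n → ℕ} {v : ℕ} {j : Fin n}
    (hnE : ¬ ExtP x) (hpat : ∀ i, i ≠ j → x i = v ∨ x i = v + 1) (hvj : v ≤ x j) :
    ∃ z, MooreMove n (n-1) x z ∧
      ∃ j' a', (∀ i, i ≠ j' → z i = a') ∧ a' ≤ z j' ∧ (z j' - a') % 2 = 1 := by
  set T := (Finset.univ.erase j).filter (fun i => x i = v + 1) with hT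
  have hTmem : ∀ i, i ∈ T ↔ (i ≠ j ∧ x i = v + 1) := by
    intro i; simp [hT, Finset.mem_erase]
  have hTv : ∀ i, i ≠ j → i ∉ T → x i = v := by
    intro i hij hiT
    rcases hpat i hij with h | h
    · exact h
    · exact absurd ((hTmem i).2 ⟨hij, h⟩) hiT
  have hTne : T.Nonempty := by
    rcases Finset.eq_empty_or_nonempty T with h | h
    · exfalso
      exact hnE ⟨j, v, fun i hij => hTv i hij (by simp [h]), hvj⟩
    · exact h
  have hTpos : ∀ i ∈ T, 1 ≤ x i := fun i hi => by rw [((hTmem i).1 hi).2]; omega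
  have hTsub : T ⊆ Finset.univ.erase j :=
    fun i hi => Finset.mem_erase.2 ⟨((hTmem i).1 hi).1, Finset.mem_univ i⟩
  have hTcard : T.card ≤ n - 1 := le_trans (Finset.card_le_card hTsub) (le_of_eq (card_erase_univ j))
  have hjT : j ∉ T := fun h => ((hTmem j).1 h).1 rfl
  by_cases hxv : x j = v
  · -- decrease all of T except one element
    have hT2 : 2 ≤ T.card := by
      by_contra h
      obtain ⟨i1, hi1⟩ := hTne
      have hTeq : T = {i1} := by
        apply Finset.eq_singleton_iff_unique_mem.2
        refine ⟨hi1, fun i hi => ?_⟩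
        by_contra hne
        have : 2 ≤ T.card := Finset.one_lt_card.2 ⟨i, hi, i1, hi1, hne⟩
        omega
      apply hnE
      refine ⟨i1, v, fun i hii => ?_, ?_⟩
      · by_cases hij : i = j
        · exact hij ▸ hxv
        · exact hTv i hij (fun h => hii (by rw [hTeq] at h; exact Finset.mem_singleton.1 h))
      · rw [((hTmem i1).1 hi1).2]; omega
    obtain ⟨t0, ht0⟩ := hTne
    have hne' : (T.erase t0).Nonempty := by
      rw [← Finset.card_pos, Finset.card_erase_of_mem ht0]; omega
    refine ⟨nimDec x (T.erase t0), nimDec_move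
      (fun i hi => hTpos i (Finset.mem_of_mem_erase hi)) hne'
      (le_trans (Finset.card_le_card (Finset.erase_subset _ _)) hTcard),
      t0, v, fun i hi => ?_, ?_, ?_⟩
    · by_cases hij : i = j
      · subst hij
        rw [nimDec_notMem (fun h => hjT (Finset.mem_of_mem_erase h))]
        exact hxv
      · by_cases hiT : i ∈ T
        · rw [nimDec_mem (Finset.mem_erase.2 ⟨hi, hiT⟩), ((hTmem i).1 hiT).2]
          omega
        · rw [nimDec_notMem (fun h => hiT (Finset.mem_of_mem_erase h))]
          exact hTv i hij hiT
    · rw [nimDec_notMem (fun h => (Finset.mem_erase.1 h).1 rfl), ((hTmem t0).1 ht0).2]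
      omega
    · rw [nimDec_notMem (fun h => (Finset.mem_erase.1 h).1 rfl), ((hTmem t0).1 ht0).2]
      omega
  · have hvlt : v < x j := by omega
    by_cases hpar : (x j - v) % 2 = 1
    · -- decrease exactly T
      refine ⟨nimDec x T, nimDec_move hTpos hTne hTcard, j, v, fun i hi => ?_, ?_, ?_⟩
      · by_cases hiT : i ∈ T
        · rw [nimDec_mem hiT, ((hTmem i).1 hiT).2]; omega
        · rw [nimDec_notMem hiT]; exact hTv i hi hiT
      · rw [nimDec_notMem hjT]; omega
      · rw [nimDec_notMem hjT]; omega
    · -- decrease T and j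
      have hx2 : v + 2 ≤ x j := by omega
      have hTub : T.card ≤ n - 2 := by
        by_contra h
        have hTeq : T = Finset.univ.erase j := by
          apply Finset.eq_of_subset_of_card_le hTsub
          rw [card_erase_univ j]; omega
        apply hnE
        refine ⟨j, v + 1, fun i hij => ?_, by omega⟩
        exact ((hTmem i).1 (hTeq ▸ Finset.mem_erase.2 ⟨hij, Finset.mem_univ i⟩)).2
      have hjT' : j ∉ T := hjT
      refine ⟨nimDec x (insert j T), nimDec_move
        (fun i hi => by
          rcases Finset.mem_insert.1 hi with h | h
          · subst h; omega
          · exact hTpos i h)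
        ⟨j, Finset.mem_insert_self _ _⟩
        (by rw [Finset.card_insert_of_notMem hjT']; omega),
        j, v, fun i hi => ?_, ?_, ?_⟩
      · by_cases hiT : i ∈ T
        · rw [nimDec_mem (Finset.mem_insert_of_mem hiT), ((hTmem i).1 hiT).2]; omega
        · rw [nimDec_notMem (by simp [hi, hiT])]
          exact hTv i hi hiT
      · rw [nimDec_mem (Finset.mem_insert_self _ _)]; omega
      · rw [nimDec_mem (Finset.mem_insert_self _ _)]; omega

/-- a `QP` position has mixed parities. -/
lemma q_not_par0 {x : Fin n → ℕ} {v : ℕ} {j : Fin n}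
    (hnE : ¬ ExtP x) (hpat : ∀ i, i ≠ j → x i = v ∨ x i = v + 1) (hvj : v ≤ x j) :
    ¬ Par0 x := by
  intro hp
  -- some coordinate equals v+1
  have hex1 : ∃ i1, i1 ≠ j ∧ x i1 = v + 1 := by
    by_contra h
    push_neg at h
    apply hnE
    refine ⟨j, v, fun i hij => ?_, hvj⟩
    rcases hpat i hij with h' | h'
    · exact h'
    · exact absurd h' (h i hij)
  obtain ⟨i1, hi1j, hi1⟩ := hex1
  by_cases hex : ∃ i2, x i2 = v
  · obtain ⟨i2, hi2⟩ := hex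
    have := hp i1 i2
    omega
  · push_neg at hex
    apply hnE
    refine ⟨j, v + 1, fun i hij => ?_, ?_⟩
    · rcases hpat i hij with h' | h'
      · exact absurd h' (hex i)
      · exact h'
    · have := hex j; omega

/-- swap lemma: from an extreme option of a non-extreme position we can build
an extreme option of flipped parity. -/
lemma swap1 (hn : 2 ≤ n) {x y : Fin n → ℕ} (hnE : ¬ ExtP x) (hy : MooreMove n (n-1) x y)
    {j : Fin n} {v : ℕ} (hj : ∀ i, i ≠ j → y i = v) (hv : v ≤ y j) :
    ∃ z, MooreMove n (n-1) x z ∧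
      ∃ j' a', (∀ i, i ≠ j' → z i = a') ∧ a' ≤ z j' ∧ (z j' - a') % 2 ≠ (y j - v) % 2 := by
  obtain ⟨S, hSpos, hSne, hSc, hS1, hS2⟩ := move_dest hy
  have hxin : ∀ i, i ≠ j → i ∈ S → x i = v + 1 := by
    intro i hij hiS
    have := hS1 i hiS; have := hSpos i hiS; have := hj i hij; omega
  have hxout : ∀ i, i ≠ j → i ∉ S → x i = v := by
    intro i hij hiS
    have := hS2 i hiS; have := hj i hij; omega
  by_cases hjS : j ∈ S
  · -- undo the decrease at j
    have hyj : y j = x j - 1 := hS1 j hjS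
    have hxj1 : 1 ≤ x j := hSpos j hjS
    have hne : (S.erase j).Nonempty := by
      rcases Finset.eq_empty_or_nonempty (S.erase j) with h | h
      · exfalso
        apply hnE
        refine ⟨j, v, fun i hij => ?_, by omega⟩
        apply hxout i hij
        intro hiS
        exact absurd (Finset.mem_erase.2 ⟨hij, hiS⟩) (by simp [h])
      · exact h
    refine ⟨nimDec x (S.erase j), nimDec_move
      (fun i hi => hSpos i (Finset.mem_of_mem_erase hi)) hne
      (le_trans (Finset.card_le_card (Finset.erase_subset _ _)) hSc),
      j, v, fun i hi => ?_, ?_, ?_⟩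
    · by_cases hiS : i ∈ S
      · rw [nimDec_mem (Finset.mem_erase.2 ⟨hi, hiS⟩), hxin i hi hiS]; omega
      · rw [nimDec_notMem (fun h => hiS (Finset.mem_of_mem_erase h))]
        exact hxout i hi hiS
    · rw [nimDec_notMem (fun h => (Finset.mem_erase.1 h).1 rfl)]; omega
    · rw [nimDec_notMem (fun h => (Finset.mem_erase.1 h).1 rfl)]; omega
  · have hyj : y j = x j := hS2 j hjS
    have hSj : ∀ i ∈ S, i ≠ j := fun i hi h => hjS (h ▸ hi)
    by_cases hlt : v < x j
    · -- also decrease j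
      have hSub : S.card ≤ n - 2 := by
        by_contra h
        have hSsub : S ⊆ Finset.univ.erase j :=
          fun i hi => Finset.mem_erase.2 ⟨hSj i hi, Finset.mem_univ i⟩
        have hSeq : S = Finset.univ.erase j := by
          apply Finset.eq_of_subset_of_card_le hSsub
          rw [card_erase_univ j]; omega
        apply hnE
        refine ⟨j, v + 1, fun i hij => ?_, by omega⟩
        exact hxin i hij (hSeq ▸ Finset.mem_erase.2 ⟨hij, Finset.mem_univ i⟩)
      refine ⟨nimDec x (insert j S), nimDec_move
        (fun i hi => by
          rcases Finset.mem_insert.1 hi with h | h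
          · subst h; omega
          · exact hSpos i h)
        ⟨j, Finset.mem_insert_self _ _⟩
        (by rw [Finset.card_insert_of_notMem hjS]; omega),
        j, v, fun i hi => ?_, ?_, ?_⟩
      · by_cases hiS : i ∈ S
        · rw [nimDec_mem (Finset.mem_insert_of_mem hiS), hxin i hi hiS]; omega
        · rw [nimDec_notMem (by simp [hi, hiS])]
          exact hxout i hi hiS
      · rw [nimDec_mem (Finset.mem_insert_self _ _)]; omega
      · rw [nimDec_mem (Finset.mem_insert_self _ _)]; omega
    · -- x j = v : y is all-v ; build the odd option
      have hxv : x j = v := by omega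
      have hS2' : 2 ≤ S.card := by
        by_contra h
        obtain ⟨i1, hi1⟩ := hSne
        have hSeq : S = {i1} := by
          apply Finset.eq_singleton_iff_unique_mem.2
          refine ⟨hi1, fun i hi => ?_⟩
          by_contra hne
          have : 2 ≤ S.card := Finset.one_lt_card.2 ⟨i, hi, i1, hi1, hne⟩
          omega
        apply hnE
        refine ⟨i1, v, fun i hii => ?_, ?_⟩
        · by_cases hij : i = j
          · exact hij ▸ hxv
          · exact hxout i hij (fun h => hii (by rw [hSeq] at h; exact Finset.mem_singleton.1 h))
        · rw [hxin i1 (hSj i1 hi1) hi1]; omega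
      obtain ⟨t0, ht0⟩ := hSne
      have hne' : (S.erase t0).Nonempty := by
        rw [← Finset.card_pos, Finset.card_erase_of_mem ht0]; omega
      refine ⟨nimDec x (S.erase t0), nimDec_move
        (fun i hi => hSpos i (Finset.mem_of_mem_erase hi)) hne'
        (le_trans (Finset.card_le_card (Finset.erase_subset _ _)) hSc),
        t0, v, fun i hi => ?_, ?_, ?_⟩
      · by_cases hij : i = j
        · subst hij
          rw [nimDec_notMem (fun h => hjS (Finset.mem_of_mem_erase h))]
          exact hxv
        · by_cases hiS : i ∈ S
          · rw [nimDec_mem (Finset.mem_erase.2 ⟨hi, hiS⟩), hxin i hij hiS]; omega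
          · rw [nimDec_notMem (fun h => hiS (Finset.mem_of_mem_erase h))]
            exact hxout i hij hiS
      · rw [nimDec_notMem (fun h => (Finset.mem_erase.1 h).1 rfl),
          hxin t0 (hSj t0 ht0) ht0]
        omega
      · rw [nimDec_notMem (fun h => (Finset.mem_erase.1 h).1 rfl),
          hxin t0 (hSj t0 ht0) ht0]
        omega

end KN1C

section KN1D
variable {n : ℕ}

lemma main_n1 (hn : 2 ≤ n) :
    ∀ (N : ℕ) (x : Fin n → ℕ), ∑ i, x i ≤ N →
      ((mooreG n (n-1) x = 0 ↔ Par0 x) ∧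
       (∀ j a, (∀ i, i ≠ j → x i = a) → a ≤ x j →
         (mooreG n (n-1) x = (x j - a) % 2 ∧ mooreGm n (n-1) x = 1 - (x j - a) % 2)) ∧
       (¬ ExtP x → mooreG n (n-1) x = mooreGm n (n-1) x) ∧
       (QP x → 2 ≤ mooreG n (n-1) x)) := by
  intro N
  induction N using Nat.strong_induction_on with
  | _ N ih =>
  intro x hx
  have IH : ∀ y, MooreMove n (n-1) x y →
      ((mooreG n (n-1) y = 0 ↔ Par0 y) ∧
       (∀ j a, (∀ i, i ≠ j → y i = a) → a ≤ y j →
         (mooreG n (n-1) y = (y j - a) % 2 ∧ mooreGm n (n-1) y = 1 - (y j - a) % 2)) ∧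
       (¬ ExtP y → mooreG n (n-1) y = mooreGm n (n-1) y) ∧
       (QP y → 2 ≤ mooreG n (n-1) y)) := by
    intro y hy
    have := hy.sum_lt
    exact ih (∑ i, y i) (by omega) y le_rfl
  refine ⟨⟨?_, ?_⟩, ?_, ?_, ?_⟩
  · -- G = 0 → Par0
    intro hG0
    by_contra hnp
    obtain ⟨y, hy, hp⟩ := par0_move hn hnp
    exact mooreG_ne_zero ⟨y, hy, ((IH y hy).1).2 hp⟩ hG0
  · -- Par0 → G = 0
    intro hp
    apply mooreG_eq_zero
    intro y hy h0
    exact par0_option hn hp hy (((IH y hy).1).1 h0)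
  · -- extreme positions
    intro j a hj ha
    by_cases hterm : x j = 0
    · have ha0 : a = 0 := by omega
      have hall : ∀ i, x i = 0 := by
        intro i
        by_cases h : i = j
        · exact h ▸ hterm
        · rw [hj i h, ha0]
      have hnomove : ¬ ∃ y, MooreMove n (n-1) x y := by
        rintro ⟨y, hy⟩
        obtain ⟨S, hSpos, ⟨i, hi⟩, -⟩ := move_dest hy
        have := hSpos i hi; have := hall i; omega
      have hz : (x j - a) % 2 = 0 := by omega
      rw [hz]
      exact ⟨mooreG_eq_zero (fun y hy _ => hnomove ⟨y, hy⟩), by rw [mooreGm_def_neg hnomove]⟩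
    · have hxj : 1 ≤ x j := by omega
      have hmove : ∃ y, MooreMove n (n-1) x y :=
        ⟨nimDec x {j}, nimDec_move
          (fun i hi => by rw [Finset.mem_singleton] at hi; subst hi; omega)
          ⟨j, Finset.mem_singleton_self j⟩ (by simp; omega)⟩
      obtain ⟨z, hz, j1, a1, hz1, hz2, hz3⟩ := ext_opt hn hj ha ⟨j, hxj⟩
      have hGz := ((IH z hz).2.1) j1 a1 hz1 hz2
      have hopt : ∀ y, MooreMove n (n-1) x y →
          ((mooreG n (n-1) y ≠ (x j - a) % 2 ∧
            mooreGm n (n-1) y = 1 - mooreG n (n-1) y ∧ mooreG n (n-1) y ≤ 1) ∨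
           (2 ≤ mooreG n (n-1) y ∧ mooreGm n (n-1) y = mooreG n (n-1) y)) := by
        intro y hy
        rcases classify hn hj ha hy with ⟨j', a', h1, h2, h3⟩ | hq
        · left
          have hp := ((IH y hy).2.1) j' a' h1 h2
          refine ⟨by rw [hp.1]; exact h3, by rw [hp.1, hp.2], by rw [hp.1]; omega⟩
        · right
          exact ⟨(IH y hy).2.2.2 hq, ((IH y hy).2.2.1 hq.1).symm⟩
      have hGz1 : mooreG n (n-1) z = 1 - (x j - a) % 2 := by
        rw [hGz.1]
        omega
      have hGmz : mooreGm n (n-1) z = (x j - a) % 2 := by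
        rw [hGz.2]
        omega
      rcases Nat.mod_two_eq_zero_or_one (x j - a) with he | he
      · rw [he]
        constructor
        · apply mooreG_eq_zero
          intro y hy h0
          rcases hopt y hy with ⟨h1, -, -⟩ | ⟨h1, -⟩
          · rw [he] at h1; exact h1 h0
          · omega
        · apply mooreGm_eq_one hmove
          · exact ⟨z, hz, by rw [hGmz, he]⟩
          · intro y hy hy1
            rcases hopt y hy with ⟨h1, h2, h3⟩ | ⟨h1, h2⟩
            · rw [he] at h1; omega
            · omega
      · rw [he]
        constructor
        · apply mooreG_eq_one
          · exact ⟨z, hz, by rw [hGz1, he]⟩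
          · intro y hy hy1
            rcases hopt y hy with ⟨h1, -, -⟩ | ⟨h1, -⟩
            · rw [he] at h1; exact h1 hy1
            · omega
        · apply mooreGm_eq_zero hmove
          intro y hy hy0
          rcases hopt y hy with ⟨h1, h2, h3⟩ | ⟨h1, h2⟩
          · rw [he] at h1; omega
          · omega
  · -- non-extreme positions: G = Gm
    intro hnE
    have hmove : ∃ y, MooreMove n (n-1) x y := by
      by_cases hall : ∀ i, x i = 0
      · exact absurd ⟨⟨0, by omega⟩, 0, fun i _ => hall i, by omega⟩ hnE
      · push_neg at hall
        obtain ⟨i0, hi0⟩ := hall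
        exact ⟨nimDec x {i0}, nimDec_move
          (fun i hi => by rw [Finset.mem_singleton] at hi; subst hi; omega)
          ⟨i0, Finset.mem_singleton_self i0⟩ (by simp; omega)⟩
    apply mooreG_eq_mooreGm hmove
    intro g
    constructor
    · rintro ⟨y, hy, rfl⟩
      by_cases hE : ExtP y
      · obtain ⟨j, v, h1, h2⟩ := hE
        have hpy := ((IH y hy).2.1) j v h1 h2
        obtain ⟨z, hz, j', a', hz1, hz2, hz3⟩ := swap1 hn hnE hy h1 h2
        have hpz := ((IH z hz).2.1) j' a' hz1 hz2
        refine ⟨z, hz, ?_⟩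
        rw [hpz.2, hpy.1]
        omega
      · exact ⟨y, hy, ((IH y hy).2.2.1 hE).symm⟩
    · rintro ⟨y, hy, rfl⟩
      by_cases hE : ExtP y
      · obtain ⟨j, v, h1, h2⟩ := hE
        have hpy := ((IH y hy).2.1) j v h1 h2
        obtain ⟨z, hz, j', a', hz1, hz2, hz3⟩ := swap1 hn hnE hy h1 h2
        have hpz := ((IH z hz).2.1) j' a' hz1 hz2
        refine ⟨z, hz, ?_⟩
        rw [hpz.1, hpy.2]
        omega
      · exact ⟨y, hy, (IH y hy).2.2.1 hE⟩
  · -- QP positions have Grundy value ≥ 2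
    rintro ⟨hnE, v, j, hpat, hvj⟩
    obtain ⟨y0, hy0, hp0⟩ := par0_move hn (q_not_par0 hnE hpat hvj)
    obtain ⟨z, hz, j', a', h1, h2, h3⟩ := q_odd_ext hn hnE hpat hvj
    have hG1 : mooreG n (n-1) z = 1 := by
      rw [(((IH z hz).2.1) j' a' h1 h2).1, h3]
    exact two_le_mooreG ⟨y0, hy0, ((IH y0 hy0).1).2 hp0⟩ ⟨z, hz, hG1⟩

end KN1D


/-- For `n ≥ 1` and `n - 1 ≤ k ≤ n`, the game `Nim¹_{n,≤k}` is tame: every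
position is a `(0,1)`-position, a `(1,0)`-position, or satisfies `G = G⁻`. -/
theorem stmt9 (n k : ℕ) (hn : 1 ≤ n) (hk1 : n - 1 ≤ k) (hk2 : k ≤ n)
    (x : Fin n → ℕ) (hx : Monotone x) :
    (mooreG n k x = 0 ∧ mooreGm n k x = 1) ∨
    (mooreG n k x = 1 ∧ mooreGm n k x = 0) ∨
    mooreG n k x = mooreGm n k x := by

  have hcase : k = n ∨ (k = n - 1 ∧ 2 ≤ n) ∨ (k = 0 ∧ n = 1) := by omega
  rcases hcase with hkn | ⟨hkn, hn2⟩ | ⟨hk0, hn1⟩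
  · subst hkn
    have h := main_n hn (∑ i, x i) x le_rfl
    by_cases hE : Ext0 x
    · obtain ⟨j, hj⟩ := hE
      have hp := h.1 j hj
      rcases Nat.mod_two_eq_zero_or_one (x j) with h2 | h2
      · left
        rw [h2] at hp
        exact ⟨hp.1, hp.2⟩
      · right; left
        rw [h2] at hp
        exact ⟨hp.1, hp.2⟩
    · right; right
      exact h.2 hE
  · subst hkn
    have h := main_n1 hn2 (∑ i, x i) x le_rfl
    by_cases hE : ExtP x
    · obtain ⟨j, a, hj, ha⟩ := hE
      have hp := h.2.1 j a hj ha
      rcases Nat.mod_two_eq_zero_or_one (x j - a) with h2 | h2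
      · left
        rw [h2] at hp
        exact ⟨hp.1, hp.2⟩
      · right; left
        rw [h2] at hp
        exact ⟨hp.1, hp.2⟩
    · right; right
      exact h.2.2.1 hE
  · subst hk0
    have hnomove : ¬ ∃ y, MooreMove n 0 x y := by
      rintro ⟨y, hy⟩
      obtain ⟨-, h1, h2⟩ := hy
      omega
    left
    exact ⟨mooreG_eq_zero (fun y hy _ => hnomove ⟨y, hy⟩), mooreGm_def_neg hnomove⟩
end
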